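/- arXiv:1705.04430 — 5 statements merged into one kernel-verified Lean document; each statement's English description precedes it below -/
import Mathlib

section
/- Let A ∈ ℝ^{n×n} have zero diagonal, L its signed Laplacian, and 𝓛_{|A|} the Laplacian of |A|. Then for all t ≥ 0, the entrywise absolute value of exp(-tL) is bounded by exp(-t𝓛_{|A|}): |exp(-tL)| ≤ exp(-t𝓛_{|A|}) entrywise, equivalently -exp(-t𝓛_{|A|}) ≤ exp(-tL) ≤ exp(-t𝓛_{|A|}) entrywise. -/
open Matrix Finset

/-- Entrywise positive part. -/
noncomputable def matPos {n : ℕ} (A : Matrix (Fin n) (Fin n) ℝ) : Matrix (Fin n) (Fin n) ℝ :=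
  fun i j => if 0 < A i j then A i j else 0

/-- Entrywise negative part. -/
noncomputable def matNeg {n : ℕ} (A : Matrix (Fin n) (Fin n) ℝ) : Matrix (Fin n) (Fin n) ℝ :=
  fun i j => if A i j < 0 then A i j else 0

/-- Entrywise absolute value. -/
def absM {m : Type*} (A : Matrix m m ℝ) : Matrix m m ℝ := fun i j => |A i j|

/-- Laplacian of a (nonnegative) matrix. -/
noncomputable def lap {m : Type*} [Fintype m] [DecidableEq m] (B : Matrix m m ℝ) :
    Matrix m m ℝ :=
  fun i j => if i = j then ∑ k ∈ Finset.univ.erase i, B i k else -B i j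

/-- Signed Laplacian. -/
noncomputable def signedLap {n : ℕ} (A : Matrix (Fin n) (Fin n) ℝ) : Matrix (Fin n) (Fin n) ℝ :=
  fun i j => if i = j then ∑ k ∈ Finset.univ.erase i, |A i k| else -A i j

/-- Diagonal matrix of row sums. -/
noncomputable def deltaM {n : ℕ} (M : Matrix (Fin n) (Fin n) ℝ) : Matrix (Fin n) (Fin n) ℝ :=
  Matrix.diagonal (fun i => ∑ j, M i j)


notation "mexp" => NormedSpace.exp

open Filter Topology

/-!
Adding `c • 1` to a matrix multiplies its exponential by `Real.exp c`. For `c` large, the shifted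
signed Laplacian `-t • L + c • 1` is entrywise dominated in absolute value by the shifted
`-t • 𝓛_{|A|} + c • 1`: the diagonals agree and are nonnegative, and the off-diagonal entries
are `t * a_ij` and `t * |a_ij|`. Domination `|X| ≤ Y` passes to all powers by the triangle inequality,
hence term by term to the exponential series.
-/

section

open scoped Nat

variable {m : Type*} [Fintype m] [DecidableEq m]

-- Any submultiplicative norm will do: it only supplies convergence of the exponential series.
attribute [local instance] Matrix.linftyOpNormedRing Matrix.linftyOpNormedAlgebra

lemma abs_pow_apply_le {X Y : Matrix m m ℝ} (h : ∀ i j, |X i j| ≤ Y i j) (k : ℕ) (i j : m) :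
    |(X ^ k) i j| ≤ (Y ^ k) i j := by
  induction k generalizing j with
  | zero => by_cases hij : i = j <;> simp [one_apply, hij]
  | succ k ih =>
    simp only [pow_succ, mul_apply]
    calc |∑ l, (X ^ k) i l * X l j| ≤ ∑ l, |(X ^ k) i l * X l j| := abs_sum_le_sum_abs _ _
      _ ≤ ∑ l, (Y ^ k) i l * Y l j := by
          gcongr with l
          rw [abs_mul]
          exact mul_le_mul (ih l) (h l j) (abs_nonneg _) ((abs_nonneg _).trans (ih l))

lemma hasSum_exp_apply (X : Matrix m m ℝ) (i j : m) :
    HasSum (fun k : ℕ => (k ! : ℝ)⁻¹ * (X ^ k) i j) (mexp X i j) :=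
  Pi.hasSum.mp (Pi.hasSum.mp (NormedSpace.exp_series_hasSum_exp' (𝕂 := ℝ) X) i) j

lemma abs_exp_apply_le_of_abs_apply_le {X Y : Matrix m m ℝ} (h : ∀ i j, |X i j| ≤ Y i j)
    (i j : m) : |mexp X i j| ≤ mexp Y i j := by
  have hterm (k : ℕ) : |(k ! : ℝ)⁻¹ * (X ^ k) i j| ≤ (k ! : ℝ)⁻¹ * (Y ^ k) i j := by
    rw [abs_mul, abs_of_pos (by positivity)]
    exact mul_le_mul_of_nonneg_left (abs_pow_apply_le h k i j) (by positivity)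
  have hX := hasSum_exp_apply X i j
  have hY := hasSum_exp_apply Y i j
  exact abs_le.mpr ⟨hasSum_le (fun k => neg_le_of_abs_le (hterm k)) hY.neg hX,
    hasSum_le (fun k => le_of_abs_le (hterm k)) hX hY⟩

lemma exp_add_smul_one_apply (X : Matrix m m ℝ) (c : ℝ) (i j : m) :
    mexp (X + c • 1) i j = Real.exp c * mexp X i j := by
  rw [Matrix.exp_add_of_commute _ _ ((Commute.one_right X).smul_right c), smul_one_eq_diagonal,
    Matrix.exp_diagonal, mul_diagonal, Pi.exp_def, Real.exp_eq_exp_ℝ, mul_comm]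

lemma abs_exp_apply_le_of_diag_eq_of_offDiag_le {X Y : Matrix m m ℝ}
    (hdiag : ∀ i, X i i = Y i i) (hoff : ∀ i j, i ≠ j → |X i j| ≤ Y i j) (i j : m) :
    |mexp X i j| ≤ mexp Y i j := by
  set c := ∑ k, |X k k|
  have hshift (i j : m) : |(X + c • 1) i j| ≤ (Y + c • 1) i j := by
    rcases eq_or_ne i j with rfl | hij
    · have hc : -X i i ≤ c :=
        (neg_le_abs _).trans (single_le_sum (fun k _ => abs_nonneg (X k k)) (mem_univ i))
      simp [hdiag, abs_of_nonneg (show 0 ≤ Y i i + c by linarith [hdiag i])]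
    · simpa [one_apply_ne hij] using hoff i j hij
  have h := abs_exp_apply_le_of_abs_apply_le hshift i j
  rw [exp_add_smul_one_apply, exp_add_smul_one_apply, abs_mul, abs_of_pos (Real.exp_pos c)] at h
  exact le_of_mul_le_mul_left h (Real.exp_pos c)

end

theorem stmt7_general {n : ℕ} (A : Matrix (Fin n) (Fin n) ℝ) :
    ∀ t : ℝ, 0 ≤ t → ∀ i j,
      |(mexp (-t • signedLap A)) i j| ≤ (mexp (-t • lap (absM A))) i j := by
  intro t ht
  refine abs_exp_apply_le_of_diag_eq_of_offDiag_le (fun i => by simp [signedLap, lap, absM])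
    fun i j hij => ?_
  simp [signedLap, lap, absM, hij, abs_mul, abs_of_nonneg ht]

theorem stmt7 {n : ℕ} (A : Matrix (Fin n) (Fin n) ℝ) (hdiag : ∀ i, A i i = 0) :
    ∀ t : ℝ, 0 ≤ t → ∀ i j,
      |(mexp (-t • signedLap A)) i j| ≤ (mexp (-t • lap (absM A))) i j :=
  stmt7_general A
end

section
/- Let A ∈ ℝ^{n×n} have zero diagonal and L its signed Laplacian. Then for all t ≥ 0, the operator ∞-norm (maximum absolute row sum) of exp(-tL) is at most 1: ‖exp(-tL)‖_∞ ≤ 1. -/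
open Matrix Finset

open Filter Topology

/-!
For `C` at least every off-diagonal absolute row sum of `A`, the matrix `C • 1 - L` has
nonnegative diagonal, so each of its absolute row sums equals `C`, i.e. `‖C • 1 - L‖_∞ ≤ C`.
Since `C • 1` is central, `exp (-t L) = exp (-t C) • exp (t (C • 1 - L))`, and
`‖exp (t (C • 1 - L))‖_∞ ≤ exp ‖t (C • 1 - L)‖_∞ ≤ exp (t C)`.
-/

open Nat in
theorem NormedSpace.norm_exp_le_exp_norm {𝔸 : Type*} [NormedRing 𝔸] [NormedAlgebra ℝ 𝔸]
    [NormOneClass 𝔸] [CompleteSpace 𝔸] (x : 𝔸) : ‖exp x‖ ≤ Real.exp ‖x‖ := by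
  have hterm (k : ℕ) : ‖(k ! : ℝ)⁻¹ • x ^ k‖ ≤ ‖x‖ ^ k / k ! := by
    rw [norm_smul, norm_inv, RCLike.norm_natCast, inv_mul_eq_div]
    gcongr
    exact norm_pow_le x k
  have hsum := Real.summable_pow_div_factorial ‖x‖
  have hnorm : Summable fun k : ℕ => ‖(k ! : ℝ)⁻¹ • x ^ k‖ :=
    hsum.of_nonneg_of_le (fun _ => norm_nonneg _) hterm
  calc ‖exp x‖ = ‖∑' k : ℕ, (k ! : ℝ)⁻¹ • x ^ k‖ := by rw [exp_eq_tsum ℝ]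
    _ ≤ ∑' k : ℕ, ‖(k ! : ℝ)⁻¹ • x ^ k‖ := norm_tsum_le_tsum_norm hnorm
    _ ≤ ∑' k : ℕ, ‖x‖ ^ k / k ! := hnorm.tsum_le_tsum hterm hsum
    _ = Real.exp ‖x‖ := by rw [Real.exp_eq_exp_ℝ, exp_eq_tsum_div]

theorem NormedSpace.norm_exp_le_one_of_norm_smul_one_add_le {𝔸 : Type*} [NormedRing 𝔸]
    [NormedAlgebra ℝ 𝔸] [NormOneClass 𝔸] [CompleteSpace 𝔸] {c : ℝ} {x : 𝔸}
    (h : ‖c • (1 : 𝔸) + x‖ ≤ c) : ‖exp x‖ ≤ 1 := by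
  let _ : NormedAlgebra ℚ 𝔸 := .restrictScalars ℚ ℝ 𝔸
  have hsplit : x = algebraMap ℝ 𝔸 (-c) + (c • 1 + x) := by
    rw [Algebra.algebraMap_eq_smul_one, neg_smul, neg_add_cancel_left]
  rw [hsplit, exp_add_of_commute (Algebra.commutes _ _), ← algebraMap_exp_comm,
    ← Real.exp_eq_exp_ℝ, Algebra.algebraMap_eq_smul_one, smul_one_mul, norm_smul,
    Real.norm_of_nonneg (Real.exp_pos _).le]
  calc Real.exp (-c) * ‖exp (c • 1 + x)‖ ≤ Real.exp (-c) * Real.exp c := by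
        gcongr
        exact (norm_exp_le_exp_norm _).trans (Real.exp_le_exp.2 h)
    _ = 1 := by rw [← Real.exp_add, neg_add_cancel, Real.exp_zero]

namespace Matrix

open scoped Norms.Operator

variable {m : Type*} [Fintype m]

theorem sum_norm_le_linfty_opNorm {α : Type*} [SeminormedAddCommGroup α] (M : Matrix m m α)
    (i : m) : ∑ j, ‖M i j‖ ≤ ‖M‖ := by
  have := Finset.le_sup (f := fun i => ∑ j, ‖M i j‖₊) (Finset.mem_univ i)
  rw [linfty_opNorm_def, ← NNReal.coe_le_coe] at *
  push_cast at this
  exact this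

theorem linfty_opNorm_le_of_sum_norm_le {α : Type*} [SeminormedAddCommGroup α] {M : Matrix m m α}
    {c : ℝ} (hc : 0 ≤ c) (h : ∀ i, ∑ j, ‖M i j‖ ≤ c) : ‖M‖ ≤ c := by
  have : (Finset.univ.sup fun i => ∑ j, ‖M i j‖₊) ≤ c.toNNReal := Finset.sup_le fun i _ => by
    rw [← NNReal.coe_le_coe, Real.coe_toNNReal c hc]
    push_cast
    exact h i
  rw [linfty_opNorm_def]
  exact (NNReal.coe_le_coe.2 this).trans_eq (Real.coe_toNNReal c hc)

theorem sum_abs_exp_apply_le_one [DecidableEq m] {M : Matrix m m ℝ} {c : ℝ} (hc : 0 ≤ c)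
    (h : ∀ i, ∑ j, |(c • 1 + M) i j| ≤ c) (i : m) : ∑ j, |NormedSpace.exp M i j| ≤ 1 := by
  have : Nonempty m := ⟨i⟩
  have hexp : ‖NormedSpace.exp M‖ ≤ 1 :=
    NormedSpace.norm_exp_le_one_of_norm_smul_one_add_le (linfty_opNorm_le_of_sum_norm_le hc h)
  exact (sum_norm_le_linfty_opNorm _ i).trans hexp

end Matrix

theorem sum_abs_smul_one_sub_signedLap_apply {n : ℕ} (A : Matrix (Fin n) (Fin n) ℝ) {C : ℝ}
    (i : Fin n) (hC : ∑ k ∈ univ.erase i, |A i k| ≤ C) :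
    ∑ j, |(C • 1 - signedLap A) i j| = C := by
  have hoff : ∀ j ∈ univ.erase i, |(C • 1 - signedLap A) i j| = |A i j| := fun j hj => by
    have hij : i ≠ j := (ne_of_mem_erase hj).symm
    simp [signedLap, hij]
  have hdiag : (C • 1 - signedLap A) i i = C - ∑ k ∈ univ.erase i, |A i k| := by
    simp [signedLap]
  rw [← add_sum_erase _ _ (mem_univ i), sum_congr rfl hoff, hdiag, abs_of_nonneg (sub_nonneg.2 hC),
    sub_add_cancel]

theorem stmt8_general {n : ℕ} (A : Matrix (Fin n) (Fin n) ℝ) :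
    ∀ t : ℝ, 0 ≤ t → ∀ i, ∑ j, |(mexp (-t • signedLap A)) i j| ≤ 1 := by
  intro t ht i
  set C := ∑ p, ∑ k ∈ univ.erase p, |A p k|
  have hC : ∀ p, ∑ k ∈ univ.erase p, |A p k| ≤ C := fun p =>
    single_le_sum (f := fun p => ∑ k ∈ univ.erase p, |A p k|)
      (fun _ _ => sum_nonneg fun _ _ => abs_nonneg _) (mem_univ p)
  have hC0 : 0 ≤ C := (sum_nonneg fun _ _ => abs_nonneg _).trans (hC i)
  have hshift : (t * C) • 1 + -t • signedLap A = t • (C • 1 - signedLap A) := by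
    rw [smul_sub, mul_smul, neg_smul, sub_eq_add_neg]
  refine Matrix.sum_abs_exp_apply_le_one (mul_nonneg ht hC0) (fun p => ?_) i
  simp only [hshift, Matrix.smul_apply, smul_eq_mul, abs_mul, abs_of_nonneg ht, ← mul_sum,
    sum_abs_smul_one_sub_signedLap_apply A p (hC p), le_refl]

theorem stmt8 {n : ℕ} (A : Matrix (Fin n) (Fin n) ℝ) (hdiag : ∀ i, A i i = 0) :
    ∀ t : ℝ, 0 ≤ t → ∀ i, ∑ j, |(mexp (-t • signedLap A)) i j| ≤ 1 :=
  stmt8_general A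
end

section
/- Suppose every solution x : [t₀,∞) → ℝⁿ of ẋ = -L x satisfies ‖x(t)‖_∞ ≤ ‖x(t₀)‖_∞ for all t ≥ t₀, where L is the signed Laplacian of a fixed matrix A with zero diagonal. Equivalently, exp(-(t-t₀)L) applied to any initial state x₀ satisfies ‖exp(-(t-t₀)L)x₀‖_∞ ≤ ‖x₀‖_∞ for all t ≥ t₀. -/
open Matrix Finset

open Filter Topology

/-!
Write `L = c • 1 - M` with `c` the trace of `L`. If `L` is weakly diagonally dominant with
nonnegative diagonal (the signed Laplacian is so with equality), every absolute row sum of `M` is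
at most `c`, so `‖M‖∞ ≤ c` and `‖exp (s • M)‖∞ ≤ exp (s * c)`. As `c • 1` commutes with `M`,
`exp (-s • L) = exp (-(s * c)) • exp (s • M)`, a contraction in the sup norm for `s ≥ 0`.
-/

theorem NormedSpace.norm_exp_le_real_exp_norm {𝔸 : Type*} [NormedRing 𝔸] [NormOneClass 𝔸]
    [NormedAlgebra ℝ 𝔸] [CompleteSpace 𝔸] (x : 𝔸) : ‖exp x‖ ≤ Real.exp ‖x‖ := by
  rw [exp_eq_tsum ℝ, Real.exp_eq_exp_ℝ, exp_eq_tsum ℝ]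
  refine (norm_tsum_le_tsum_norm (norm_expSeries_summable' x)).trans <|
    Summable.tsum_le_tsum (fun n => ?_) (norm_expSeries_summable' x)
      (expSeries_summable' (𝕂 := ℝ) ‖x‖)
  rw [norm_smul, norm_inv, Real.norm_natCast, smul_eq_mul]
  exact mul_le_mul_of_nonneg_left (norm_pow_le x n) (by positivity)

namespace Matrix

variable {m : Type*} [Fintype m] [DecidableEq m]

theorem exp_neg_smul_eq_smul_exp (L : Matrix m m ℝ) (s c : ℝ) :
    mexp (-s • L) = Real.exp (-(s * c)) • mexp (s • (c • 1 - L)) := by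
  have hsplit : -s • L = algebraMap ℝ _ (-(s * c)) + s • (c • 1 - L) := by
    rw [Algebra.algebraMap_eq_smul_one, smul_sub, smul_smul, neg_smul, neg_smul]
    abel
  rw [hsplit, exp_add_of_commute _ _ (Algebra.commute_algebraMap_left _ _),
    algebraMap_eq_diagonal, exp_diagonal, Pi.exp_def]
  simp only [Pi.algebraMap_apply, Algebra.algebraMap_self, RingHom.id_apply, ← Real.exp_eq_exp_ℝ]
  exact (smul_eq_diagonal_mul _ _).symm

theorem sum_norm_smul_one_sub_le {L : Matrix m m ℝ}
    (hL : ∀ i, ∑ j ∈ univ.erase i, |L i j| ≤ L i i) {c : ℝ} (hc : ∀ i, L i i ≤ c) (i : m) :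
    ∑ j, ‖(c • 1 - L) i j‖ ≤ c := by
  rw [← add_sum_erase _ _ (mem_univ i)]
  have hoff : ∑ j ∈ univ.erase i, ‖(c • 1 - L) i j‖ = ∑ j ∈ univ.erase i, |L i j| :=
    sum_congr rfl fun j hj => by simp [(ne_of_mem_erase hj).symm]
  have hdiag : ‖(c • 1 - L) i i‖ = c - L i i := by
    simp [abs_of_nonneg (sub_nonneg.2 (hc i))]
  linarith [hL i]

section LinftyOpNorm

attribute [local instance] Matrix.linftyOpSeminormedAddCommGroup Matrix.linftyOpNormedRing
  Matrix.linftyOpNormedAlgebra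

omit [DecidableEq m] in
theorem linfty_opNorm_le_of_sum_le {n α : Type*} [Fintype n] [SeminormedAddCommGroup α]
    {A : Matrix m n α} {c : ℝ} (hc : 0 ≤ c) (h : ∀ i, ∑ j, ‖A i j‖ ≤ c) : ‖A‖ ≤ c := by
  rw [linfty_opNorm_def, ← NNReal.coe_mk c hc, NNReal.coe_le_coe]
  refine Finset.sup_le fun i _ => ?_
  rw [← NNReal.coe_le_coe]
  push_cast
  exact h i

theorem norm_mulVec_exp_neg_smul_le {L : Matrix m m ℝ}
    (hL : ∀ i, ∑ j ∈ univ.erase i, |L i j| ≤ L i i) {s : ℝ} (hs : 0 ≤ s) (x : m → ℝ) :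
    ‖mexp (-s • L) *ᵥ x‖ ≤ ‖x‖ := by
  cases isEmpty_or_nonempty m
  · rw [Subsingleton.elim (mexp (-s • L) *ᵥ x) x]
  have hdiag_nonneg (i : m) : 0 ≤ L i i :=
    (sum_nonneg fun _ _ => abs_nonneg _).trans (hL i)
  set c := L.trace
  have hc (i : m) : L i i ≤ c := single_le_sum (fun j _ => hdiag_nonneg j) (mem_univ i)
  have hM : ‖c • 1 - L‖ ≤ c := linfty_opNorm_le_of_sum_le
    (sum_nonneg fun i _ => hdiag_nonneg i) (sum_norm_smul_one_sub_le hL hc)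
  have hexp : ‖mexp (s • (c • 1 - L)) *ᵥ x‖ ≤ Real.exp (s * c) * ‖x‖ :=
    calc ‖mexp (s • (c • 1 - L)) *ᵥ x‖ ≤ ‖mexp (s • (c • 1 - L))‖ * ‖x‖ :=
          linfty_opNorm_mulVec _ _
      _ ≤ Real.exp ‖s • (c • 1 - L)‖ * ‖x‖ := by
          gcongr; exact NormedSpace.norm_exp_le_real_exp_norm _
      _ ≤ Real.exp (s * c) * ‖x‖ := by
          gcongr
          rw [norm_smul, Real.norm_of_nonneg hs]
          gcongr
  rw [exp_neg_smul_eq_smul_exp L s c, smul_mulVec, norm_smul,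
    Real.norm_of_nonneg (Real.exp_pos _).le]
  calc Real.exp (-(s * c)) * ‖mexp (s • (c • 1 - L)) *ᵥ x‖
      ≤ Real.exp (-(s * c)) * (Real.exp (s * c) * ‖x‖) := by gcongr
    _ = ‖x‖ := by rw [← mul_assoc, ← Real.exp_add, neg_add_cancel, Real.exp_zero, one_mul]

end LinftyOpNorm

end Matrix

theorem sum_erase_abs_signedLap {n : ℕ} (A : Matrix (Fin n) (Fin n) ℝ) (i : Fin n) :
    ∑ j ∈ univ.erase i, |signedLap A i j| = signedLap A i i := by
  simp only [signedLap]
  exact sum_congr rfl fun j hj => by simp [(ne_of_mem_erase hj).symm]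

theorem stmt9_general {n : ℕ} (A : Matrix (Fin n) (Fin n) ℝ) :
    ∀ t₀ t : ℝ, t₀ ≤ t → ∀ x₀ : Fin n → ℝ,
      ‖(mexp (-(t - t₀) • signedLap A)).mulVec x₀‖ ≤ ‖x₀‖ :=
  fun _ _ ht x₀ =>
    Matrix.norm_mulVec_exp_neg_smul_le (fun i => (sum_erase_abs_signedLap A i).le)
      (sub_nonneg.2 ht) x₀

theorem stmt9 {n : ℕ} (A : Matrix (Fin n) (Fin n) ℝ) (hdiag : ∀ i, A i i = 0) :
    ∀ t₀ t : ℝ, t₀ ≤ t → ∀ x₀ : Fin n → ℝ,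
      ‖(mexp (-(t - t₀) • signedLap A)).mulVec x₀‖ ≤ ‖x₀‖ :=
  stmt9_general A
end

section
/- Let A ∈ ℝ^{n×n} have zero diagonal and D ∈ 𝓓_n satisfy DAD = |A|. If exp(-t𝓛_{|A|}) converges as t → ∞ to the rank-one stochastic matrix 1_n νᵀ for some nonnegative vector ν with νᵀ1_n = 1, then exp(-tL) converges as t → ∞ to (D1_n)(νᵀD), and every solution of ẋ = -Lx converges to (νᵀD x₀)·(D1_n), i.e., bipartite consensus is achieved. -/
open Matrix Finset

open Filter Topology

/-!
With `D = diagonal d`, the balancing condition `D A D = |A|` and `D² = 1` give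
`L = D 𝓛_{|A|} D`, so `exp (-t L) = D exp (-t 𝓛_{|A|}) D` by conjugation invariance of the
exponential. Letting `t → ∞` and multiplying by the continuous map `M ↦ D M D` turns the limit
`1 νᵀ` into `(D 1)(νᵀ D)`; applying it to `x₀` gives the limit of every trajectory.
-/

namespace Matrix

variable {m 𝔸 : Type*} [Fintype m]

lemma tendsto_mulVec_of_tendsto_vecMulVec {ι : Type*} {l : Filter ι} [CommSemiring 𝔸]
    [TopologicalSpace 𝔸] [IsTopologicalSemiring 𝔸] {M : ι → Matrix m m 𝔸} {u w : m → 𝔸}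
    (hM : Tendsto M l (𝓝 (vecMulVec u w))) (x : m → 𝔸) :
    Tendsto (fun t => M t *ᵥ x) l (𝓝 ((w ⬝ᵥ x) • u)) := by
  have hcont : Continuous fun N : Matrix m m 𝔸 => N *ᵥ x :=
    continuous_id.matrix_mulVec continuous_const
  simpa only [vecMulVec_mulVec, op_smul_eq_smul, Function.comp_def] using
    (hcont.tendsto _).comp hM

variable [DecidableEq m]

lemma diagonal_mul_diagonal_self_eq_one [NonAssocSemiring 𝔸] {d : m → 𝔸}
    (hd : ∀ i, d i * d i = 1) : diagonal d * diagonal d = 1 := by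
  simp [diagonal_mul_diagonal, hd]

lemma exp_conj_of_mul_self_eq_one [NormedCommRing 𝔸] [NormedAlgebra ℚ 𝔸] [CompleteSpace 𝔸]
    {U : Matrix m m 𝔸} (hU : U * U = 1) (M : Matrix m m 𝔸) :
    mexp (U * M * U) = U * mexp M * U := by
  have hinv : U⁻¹ = U := inv_eq_right_inv hU
  simpa only [hinv] using exp_conj U M ⟨⟨U, U, hU, hU⟩, rfl⟩

lemma diagonal_mul_of_const_mul_diagonal [CommSemiring 𝔸] (d ν : m → 𝔸) :
    diagonal d * of (fun _ j => ν j) * diagonal d = vecMulVec d (fun j => ν j * d j) := by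
  ext i j
  simp [mul_diagonal, diagonal_mul, vecMulVec_apply, mul_assoc]

end Matrix

lemma signedLap_eq_diagonal_mul_lap_absM_mul_diagonal {n : ℕ} {A : Matrix (Fin n) (Fin n) ℝ}
    {d : Fin n → ℝ} (hd : ∀ i, d i * d i = 1)
    (hbal : diagonal d * A * diagonal d = absM A) :
    signedLap A = diagonal d * lap (absM A) * diagonal d := by
  have hA : ∀ i j, d i * |A i j| * d j = A i j := fun i j => by
    have hij := congrFun₂ hbal i j
    rw [mul_diagonal, diagonal_mul] at hij
    change _ = |A i j| at hij
    rw [← hij]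
    linear_combination A i j * d j * d j * hd i + A i j * hd j
  ext i j
  simp only [mul_diagonal, diagonal_mul, signedLap, lap, absM]
  split_ifs with hij
  · rw [hij, mul_right_comm, hd, one_mul]
  · rw [mul_neg, neg_mul, hA]

lemma exp_smul_signedLap {n : ℕ} {A : Matrix (Fin n) (Fin n) ℝ}
    {d : Fin n → ℝ} (hd : ∀ i, d i * d i = 1)
    (hbal : diagonal d * A * diagonal d = absM A) (c : ℝ) :
    mexp (c • signedLap A) = diagonal d * mexp (c • lap (absM A)) * diagonal d := by
  rw [signedLap_eq_diagonal_mul_lap_absM_mul_diagonal hd hbal, ← Matrix.smul_mul,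
    ← Matrix.mul_smul, exp_conj_of_mul_self_eq_one (diagonal_mul_diagonal_self_eq_one hd)]

theorem stmt12_general {n : ℕ} (A : Matrix (Fin n) (Fin n) ℝ)
    (d : Fin n → ℝ) (hd : ∀ i, d i = 1 ∨ d i = -1)
    (hbal : Matrix.diagonal d * A * Matrix.diagonal d = absM A)
    (ν : Fin n → ℝ)
    (hconv : Tendsto (fun t : ℝ => mexp (-t • lap (absM A))) atTop
      (nhds (Matrix.of fun _ j => ν j))) :
    Tendsto (fun t : ℝ => mexp (-t • signedLap A)) atTop
      (nhds (Matrix.of fun i j => d i * (ν j * d j))) ∧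
    ∀ x₀ : Fin n → ℝ,
      Tendsto (fun t : ℝ => (mexp (-t • signedLap A)).mulVec x₀) atTop
        (nhds ((∑ j, ν j * d j * x₀ j) • d)) := by
  have hd2 : ∀ i, d i * d i = 1 := fun i => mul_self_eq_one_iff.mpr (hd i)
  have hconj : Continuous fun M : Matrix (Fin n) (Fin n) ℝ => diagonal d * M * diagonal d :=
    (continuous_const.matrix_mul continuous_id).matrix_mul continuous_const
  have hlim : Tendsto (fun t : ℝ => mexp (-t • signedLap A)) atTop
      (𝓝 (vecMulVec d fun j => ν j * d j)) := by
    simp only [exp_smul_signedLap hd2 hbal]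
    rw [← diagonal_mul_of_const_mul_diagonal]
    exact (hconj.tendsto _).comp hconv
  exact ⟨hlim, tendsto_mulVec_of_tendsto_vecMulVec hlim⟩

theorem stmt12 {n : ℕ} (A : Matrix (Fin n) (Fin n) ℝ) (hdiag : ∀ i, A i i = 0)
    (d : Fin n → ℝ) (hd : ∀ i, d i = 1 ∨ d i = -1)
    (hbal : Matrix.diagonal d * A * Matrix.diagonal d = absM A)
    (ν : Fin n → ℝ) (hν0 : ∀ i, 0 ≤ ν i) (hν1 : ∑ i, ν i = 1)
    (hconv : Tendsto (fun t : ℝ => mexp (-t • lap (absM A))) atTop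
      (nhds (Matrix.of fun _ j => ν j))) :
    Tendsto (fun t : ℝ => mexp (-t • signedLap A)) atTop
      (nhds (Matrix.of fun i j => d i * (ν j * d j))) ∧
    ∀ x₀ : Fin n → ℝ,
      Tendsto (fun t : ℝ => (mexp (-t • signedLap A)).mulVec x₀) atTop
        (nhds ((∑ j, ν j * d j * x₀ j) • d)) :=
  stmt12_general A d hd hbal ν hconv
end

section
/- Let A ∈ ℝ^{n×n} have zero diagonal, L its signed Laplacian, 𝓛_{|A|} the Laplacian of |A|, and 𝓛_𝐀 the Laplacian of the lifted matrix 𝐀 = [[A⁺, |A⁻|],[|A⁻|, A⁺]]. Then for all t, exp(-t𝓛_𝐀) equals the 2×2 block matrix [[Φ_even(t), Φ_odd(t)],[Φ_odd(t), Φ_even(t)]], where Φ_even(t) = (exp(-tL)+exp(-t𝓛_{|A|}))/2 and Φ_odd(t) = (exp(-t𝓛_{|A|})-exp(-tL))/2. -/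
open Matrix Finset

open Filter Topology

/-!
Write `P = A⁺`, `N = |A⁻|` and `D` for the diagonal matrix of row sums of `|A|`. Since
`P + N = |A|` and `P - N = A`, the Laplacian of the lift is `[[D - P, -N], [-N, D - P]]`, whose
blocks are half the sum and half the difference of `𝓛_{|A|} = D - P - N` and (as `A` has zero
diagonal) `L = D - P + N`. Conjugation by `[[1, 1], [1, -1]]` turns
`[[(X + Y)/2, (X - Y)/2], [(X - Y)/2, (X + Y)/2]]` into `diag(X, Y)`, and the exponential
commutes with conjugation and with block-diagonal matrices.
-/

theorem HasSum.matrix_fromBlocks_zero {ι m n R : Type*} [AddCommMonoid R] [TopologicalSpace R]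
    {f : ι → Matrix m m R} {g : ι → Matrix n n R} {a : Matrix m m R} {b : Matrix n n R}
    (hf : HasSum f a) (hg : HasSum g b) :
    HasSum (fun k => fromBlocks (f k) 0 0 (g k)) (fromBlocks a 0 0 b) := by
  let blockDiag : Matrix m m R × Matrix n n R →+ Matrix (m ⊕ n) (m ⊕ n) R :=
    { toFun := fun p => fromBlocks p.1 0 0 p.2
      map_zero' := fromBlocks_zero
      map_add' := fun p q => by simp [fromBlocks_add] }
  exact (hf.prodMk hg).map blockDiag
    (continuous_fst.matrix_fromBlocks continuous_const continuous_const continuous_snd)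

namespace Matrix

variable {m n 𝕜 : Type*} [Fintype m] [DecidableEq m] [Fintype n] [DecidableEq n]

theorem fromBlocks_zero_pow {R : Type*} [Semiring R] (X : Matrix m m R) (Y : Matrix n n R)
    (k : ℕ) : fromBlocks X 0 0 Y ^ k = fromBlocks (X ^ k) 0 0 (Y ^ k) := by
  induction k with
  | zero => simp
  | succ k ih => simp [pow_succ, ih, fromBlocks_multiply]

variable [RCLike 𝕜]

open scoped Matrix.Norms.Operator in
theorem hasSum_exp (X : Matrix m m 𝕜) :
    HasSum (fun k => (k.factorial⁻¹ : 𝕜) • X ^ k) (mexp X) :=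
  NormedSpace.exp_series_hasSum_exp' X

theorem exp_fromBlocks_zero (X : Matrix m m 𝕜) (Y : Matrix n n 𝕜) :
    mexp (fromBlocks X 0 0 Y) = fromBlocks (mexp X) 0 0 (mexp Y) := by
  refine (hasSum_exp _).unique ?_
  simpa [fromBlocks_zero_pow, fromBlocks_smul] using
    (hasSum_exp X).matrix_fromBlocks_zero (hasSum_exp Y)

/-- Conjugation by `[[1, 1], [1, -1]]`, whose square is `2`, diagonalises the block matrix. -/
theorem exp_fromBlocks_half (X Y : Matrix m m 𝕜) :
    mexp (fromBlocks ((2⁻¹ : 𝕜) • (X + Y)) ((2⁻¹ : 𝕜) • (X - Y))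
        ((2⁻¹ : 𝕜) • (X - Y)) ((2⁻¹ : 𝕜) • (X + Y))) =
      fromBlocks ((2⁻¹ : 𝕜) • (mexp X + mexp Y)) ((2⁻¹ : 𝕜) • (mexp X - mexp Y))
        ((2⁻¹ : 𝕜) • (mexp X - mexp Y)) ((2⁻¹ : 𝕜) • (mexp X + mexp Y)) := by
  set S : Matrix (m ⊕ m) (m ⊕ m) 𝕜 := fromBlocks 1 1 1 (-1)
  have hS : S * ((2⁻¹ : 𝕜) • S) = 1 := by
    rw [Matrix.mul_smul, fromBlocks_multiply, ← fromBlocks_one, fromBlocks_smul]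
    congr 1 <;> simp <;> module
  have hconj (Z W : Matrix m m 𝕜) : S * fromBlocks Z 0 0 W * S⁻¹ =
      fromBlocks ((2⁻¹ : 𝕜) • (Z + W)) ((2⁻¹ : 𝕜) • (Z - W))
        ((2⁻¹ : 𝕜) • (Z - W)) ((2⁻¹ : 𝕜) • (Z + W)) := by
    rw [inv_eq_right_inv hS, Matrix.mul_smul, fromBlocks_multiply, fromBlocks_multiply,
      fromBlocks_smul]
    congr 1 <;> simp <;> module
  rw [← hconj, exp_conj _ _ ((isUnit_iff_isUnit_det S).mpr (isUnit_det_of_right_inverse hS)),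
    exp_fromBlocks_zero, hconj]

end Matrix

section Laplacian

variable {m : Type*} [Fintype m] [DecidableEq m]

theorem lap_eq_diagonal_sub (B : Matrix m m ℝ) : lap B = diagonal (fun i => ∑ j, B i j) - B := by
  ext i j
  by_cases hij : i = j
  · subst hij
    simp [lap, Finset.sum_erase_eq_sub]
  · simp [lap, hij]

theorem lap_fromBlocks_swap (P N : Matrix m m ℝ) :
    lap (fromBlocks P N N P) =
      fromBlocks (diagonal (fun i => ∑ j, (P + N) i j) - P) (-N)
        (-N) (diagonal (fun i => ∑ j, (P + N) i j) - P) := by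
  have hrow : (fun i => ∑ j, fromBlocks P N N P i j) =
      Sum.elim (fun i => ∑ j, (P + N) i j) (fun i => ∑ j, (P + N) i j) := by
    funext i
    cases i <;> simp [Fintype.sum_sum_type, Finset.sum_add_distrib, add_comm]
  rw [lap_eq_diagonal_sub, hrow, ← fromBlocks_diagonal, sub_eq_add_neg, fromBlocks_neg,
    fromBlocks_add]
  simp [sub_eq_add_neg]

end Laplacian

section SignedLaplacian

variable {n : ℕ}

theorem signedLap_eq_diagonal_sub {A : Matrix (Fin n) (Fin n) ℝ} (hdiag : ∀ i, A i i = 0) :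
    signedLap A = diagonal (fun i => ∑ j, absM A i j) - A := by
  ext i j
  by_cases hij : i = j
  · subst hij
    simp [signedLap, absM, Finset.sum_erase_eq_sub, hdiag]
  · simp [signedLap, hij]

theorem matPos_add_absM_matNeg (A : Matrix (Fin n) (Fin n) ℝ) :
    matPos A + absM (matNeg A) = absM A := by
  ext i j
  simp only [matPos, matNeg, absM, Matrix.add_apply]
  split_ifs <;> grind

theorem matPos_sub_absM_matNeg (A : Matrix (Fin n) (Fin n) ℝ) :
    matPos A - absM (matNeg A) = A := by
  ext i j
  simp only [matPos, matNeg, absM, Matrix.sub_apply]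
  split_ifs <;> grind

theorem lap_fromBlocks_matPos_matNeg {A : Matrix (Fin n) (Fin n) ℝ} (hdiag : ∀ i, A i i = 0) :
    lap (fromBlocks (matPos A) (absM (matNeg A)) (absM (matNeg A)) (matPos A)) =
      fromBlocks ((2⁻¹ : ℝ) • (lap (absM A) + signedLap A))
        ((2⁻¹ : ℝ) • (lap (absM A) - signedLap A))
        ((2⁻¹ : ℝ) • (lap (absM A) - signedLap A))
        ((2⁻¹ : ℝ) • (lap (absM A) + signedLap A)) := by
  set P := matPos A
  set N := absM (matNeg A)
  have hsum : P + N = absM A := matPos_add_absM_matNeg A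
  have hdiff : P - N = A := matPos_sub_absM_matNeg A
  rw [lap_fromBlocks_swap, lap_eq_diagonal_sub (absM A), signedLap_eq_diagonal_sub hdiag, ← hsum,
    ← hdiff]
  congr 1 <;> module

end SignedLaplacian

theorem stmt14 {n : ℕ} (A : Matrix (Fin n) (Fin n) ℝ) (hdiag : ∀ i, A i i = 0) :
    ∀ t : ℝ,
      mexp (-t • lap (Matrix.fromBlocks (matPos A) (absM (matNeg A))
          (absM (matNeg A)) (matPos A))) =
      Matrix.fromBlocks
        ((2⁻¹ : ℝ) • (mexp (-t • signedLap A) + mexp (-t • lap (absM A))))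
        ((2⁻¹ : ℝ) • (mexp (-t • lap (absM A)) - mexp (-t • signedLap A)))
        ((2⁻¹ : ℝ) • (mexp (-t • lap (absM A)) - mexp (-t • signedLap A)))
        ((2⁻¹ : ℝ) • (mexp (-t • signedLap A) + mexp (-t • lap (absM A)))) := by
  intro t
  have hscaled : -t • lap (fromBlocks (matPos A) (absM (matNeg A)) (absM (matNeg A)) (matPos A)) =
      fromBlocks ((2⁻¹ : ℝ) • (-t • lap (absM A) + -t • signedLap A))
        ((2⁻¹ : ℝ) • (-t • lap (absM A) - -t • signedLap A))
        ((2⁻¹ : ℝ) • (-t • lap (absM A) - -t • signedLap A))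
        ((2⁻¹ : ℝ) • (-t • lap (absM A) + -t • signedLap A)) := by
    rw [lap_fromBlocks_matPos_matNeg hdiag, fromBlocks_smul]
    congr 1 <;> module
  rw [hscaled, exp_fromBlocks_half, add_comm (mexp (-t • lap (absM A)))]
end
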